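/- Let 0<q<1, 0<α<2 and β>0. Then there exists a constant C>0, depending only on q, α and β, such that for every real z with 0<z<(1−q)^{−α} one has |e_{α,β}(−z;q)| ≤ C/(1+z). -/

import Mathlib

open scoped BigOperators

/-- The infinite q-Pochhammer symbol `(a;q)_∞ = ∏_{j=0}^∞ (1 - q^j a)`. -/
noncomputable def qPochInf (q a : ℝ) : ℝ := ∏' j : ℕ, (1 - q ^ j * a)

/-- The q-gamma function `Γ_q(x) = ((q;q)_∞/(q^x;q)_∞)·(1-q)^{1-x}`. -/
noncomputable def qGamma (q x : ℝ) : ℝ :=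
  (qPochInf q q / qPochInf q (q ^ x)) * (1 - q) ^ (1 - x)

/-- The q-Mittag-Leffler function `e_{α,β}(z;q) = ∑_{k=0}^∞ z^k/Γ_q(αk+β)`. -/
noncomputable def qML (q α β z : ℝ) : ℝ := ∑' k : ℕ, z ^ k / qGamma q (α * k + β)

/-! Writing `w = z(1-q)^α < 1` and `P k = (q^{αk+β};q)_∞`, one has
`e_{α,β}(-z;q) = (1-q)^{β-1}/(q;q)_∞ · ∑ (-w)^k P k`, where `P` is increasing with values in
`(0,1]`. Multiplying the alternating series by `1 + w` telescopes it into
`P 0 + ∑ (-w)^{k+1} (P (k+1) - P k)`, which is at most `P 0 + ∑ (P (k+1) - P k) ≤ 1` in absolute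
value. Hence `|e_{α,β}(-z;q)| ≲ 1/(1 + w)`, and `1 + z ≤ (1 + (1-q)^{-α})(1 + w)`. -/

open Real

lemma one_sub_pow_mul_pos {q a : ℝ} (hq0 : 0 ≤ q) (hq1 : q ≤ 1) (ha0 : 0 ≤ a) (ha1 : a < 1)
    (j : ℕ) : 0 < 1 - q ^ j * a := by
  have : q ^ j * a ≤ a := mul_le_of_le_one_left ha0 (pow_le_one₀ hq0 hq1)
  linarith

lemma summable_log_one_sub_pow_mul {q : ℝ} (hq0 : 0 ≤ q) (hq1 : q < 1) (a : ℝ) :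
    Summable fun j : ℕ => log (1 - q ^ j * a) := by
  simpa only [sub_eq_add_neg] using
    Real.summable_log_one_add_of_summable ((summable_geometric_of_lt_one hq0 hq1).mul_right a).neg

lemma qPochInf_eq_exp_tsum_log {q a : ℝ} (hq0 : 0 ≤ q) (hq1 : q < 1) (ha0 : 0 ≤ a) (ha1 : a < 1) :
    qPochInf q a = exp (∑' j : ℕ, log (1 - q ^ j * a)) :=
  (rexp_tsum_eq_tprod (one_sub_pow_mul_pos hq0 hq1.le ha0 ha1)
    (summable_log_one_sub_pow_mul hq0 hq1 a)).symm

lemma qPochInf_pos {q a : ℝ} (hq0 : 0 ≤ q) (hq1 : q < 1) (ha0 : 0 ≤ a) (ha1 : a < 1) :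
    0 < qPochInf q a := by
  rw [qPochInf_eq_exp_tsum_log hq0 hq1 ha0 ha1]
  exact exp_pos _

lemma qPochInf_le_one {q a : ℝ} (hq0 : 0 ≤ q) (hq1 : q < 1) (ha0 : 0 ≤ a) (ha1 : a < 1) :
    qPochInf q a ≤ 1 := by
  rw [qPochInf_eq_exp_tsum_log hq0 hq1 ha0 ha1, exp_le_one_iff]
  refine tsum_nonpos fun j => log_nonpos (one_sub_pow_mul_pos hq0 hq1.le ha0 ha1 j).le ?_
  have := mul_nonneg (pow_nonneg hq0 j) ha0
  linarith

lemma qPochInf_le_qPochInf {q a b : ℝ} (hq0 : 0 ≤ q) (hq1 : q < 1) (ha0 : 0 ≤ a) (hab : a ≤ b)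
    (hb1 : b < 1) : qPochInf q b ≤ qPochInf q a := by
  rw [qPochInf_eq_exp_tsum_log hq0 hq1 (ha0.trans hab) hb1,
    qPochInf_eq_exp_tsum_log hq0 hq1 ha0 (hab.trans_lt hb1), exp_le_exp]
  refine Summable.tsum_le_tsum (fun j => log_le_log
    (one_sub_pow_mul_pos hq0 hq1.le (ha0.trans hab) hb1 j) ?_)
    (summable_log_one_sub_pow_mul hq0 hq1 b) (summable_log_one_sub_pow_mul hq0 hq1 a)
  have := pow_nonneg hq0 j
  gcongr

lemma monotone_qPochInf_rpow {q α β : ℝ} (hq0 : 0 < q) (hq1 : q < 1) (hα : 0 ≤ α) (hβ : 0 < β) :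
    Monotone fun k : ℕ => qPochInf q (q ^ (α * k + β)) := by
  refine monotone_nat_of_le_succ fun k => qPochInf_le_qPochInf hq0.le hq1 (rpow_nonneg hq0.le _) ?_
    (rpow_lt_one hq0.le hq1 (by positivity))
  exact rpow_le_rpow_of_exponent_ge hq0 hq1.le (by push_cast; nlinarith)

lemma inv_qGamma {q : ℝ} (hq1 : q < 1) (x : ℝ) :
    (qGamma q x)⁻¹ = (1 - q) ^ (x - 1) * qPochInf q (q ^ x) / qPochInf q q := by
  rw [qGamma, mul_inv, inv_div, ← rpow_neg (by linarith), neg_sub]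
  ring

lemma qML_neg_eq_mul_tsum {q : ℝ} (hq1 : q < 1) (α β z : ℝ) :
    qML q α β (-z) = (1 - q) ^ (β - 1) / qPochInf q q *
      ∑' k : ℕ, (-(z * (1 - q) ^ α)) ^ k * qPochInf q (q ^ (α * k + β)) := by
  rw [qML, ← tsum_mul_left]
  refine tsum_congr fun k => ?_
  have h1q : 0 < 1 - q := by linarith
  have hpow : (1 - q) ^ (α * k + β - 1) = (1 - q) ^ (β - 1) * ((1 - q) ^ α) ^ k := by
    rw [← rpow_natCast, ← rpow_mul h1q.le, ← rpow_add h1q]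
    ring_nf
  rw [div_eq_mul_inv, inv_qGamma hq1, hpow, neg_pow z, neg_pow (z * _), mul_pow]
  ring

lemma one_add_mul_abs_tsum_neg_pow_mul_le_one {w : ℝ} (hw0 : 0 ≤ w) (hw1 : w < 1)
    {P : ℕ → ℝ} (hP : Monotone P) (hP0 : 0 ≤ P 0) (hP1 : ∀ k, P k ≤ 1) :
    (1 + w) * |∑' k : ℕ, (-w) ^ k * P k| ≤ 1 := by
  set f : ℕ → ℝ := fun k => (-w) ^ k * P k
  set d : ℕ → ℝ := fun k => P (k + 1) - P k
  have hd0 : ∀ k, 0 ≤ d k := fun k => sub_nonneg.mpr (hP k.le_succ)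
  have hd_partial : ∀ n, ∑ i ∈ Finset.range n, d i ≤ 1 - P 0 := fun n => by
    rw [Finset.sum_range_sub]
    linarith [hP1 n]
  have hd : HasSum d (∑' k, d k) := (summable_of_sum_range_le hd0 hd_partial).hasSum
  have hf : HasSum f (∑' k, f k) := by
    refine (Summable.of_norm_bounded (summable_geometric_of_lt_one hw0 hw1) fun k => ?_).hasSum
    rw [norm_mul, norm_pow, norm_neg, Real.norm_of_nonneg hw0]
    exact mul_le_of_le_one_right (pow_nonneg hw0 k)
      (abs_le.mpr ⟨by linarith [hP (Nat.zero_le k)], hP1 k⟩)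
  have htel : HasSum (fun k => (-w) ^ (k + 1) * d k) ((1 + w) * ∑' k, f k - P 0) := by
    have hsum := ((hasSum_nat_add_iff' 1).mpr hf).add (hf.mul_left w)
    have hterm : (fun k => f (k + 1) + w * f k) = fun k => (-w) ^ (k + 1) * d k :=
      funext fun k => by simp only [f, d, pow_succ]; ring
    have hval : ∑' k, f k - ∑ i ∈ Finset.range 1, f i + w * ∑' k, f k =
        (1 + w) * ∑' k, f k - P 0 := by
      simp only [Finset.sum_range_one, f, pow_zero, one_mul]
      ring
    rwa [hterm, hval] at hsum
  have hbound : ‖(1 + w) * ∑' k, f k - P 0‖ ≤ ∑' k, d k := by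
    rw [← htel.tsum_eq]
    refine tsum_of_norm_bounded hd fun k => ?_
    rw [norm_mul, norm_pow, norm_neg, Real.norm_of_nonneg hw0, Real.norm_of_nonneg (hd0 k)]
    exact mul_le_of_le_one_left (hd0 k) (pow_le_one₀ hw0 hw1.le)
  have hd_le : ∑' k, d k ≤ 1 - P 0 := Real.tsum_le_of_sum_range_le hd0 hd_partial
  rw [Real.norm_eq_abs, abs_le] at hbound
  rw [← abs_of_pos (by linarith : 0 < 1 + w), ← abs_mul, abs_le]
  constructor <;> linarith

theorem qML_decay_bound_general (q α β : ℝ) (hq0 : 0 < q) (hq1 : q < 1)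
    (hα0 : 0 < α) (hβ : 0 < β) :
    ∃ C : ℝ, 0 < C ∧ ∀ z : ℝ, 0 < z → z < (1 - q) ^ (-α) →
      |qML q α β (-z)| ≤ C / (1 + z) := by
  have h1q : 0 < 1 - q := by linarith
  set K := (1 - q) ^ (β - 1) / qPochInf q q
  set v := (1 - q) ^ α
  have hK : 0 < K := div_pos (rpow_pos_of_pos h1q _) (qPochInf_pos hq0.le hq1 hq0.le hq1)
  have hv : 0 < v := rpow_pos_of_pos h1q _
  refine ⟨K * (1 + v⁻¹), by positivity, fun z hz0 hz1 => ?_⟩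
  have hw1 : z * v < 1 := by rwa [rpow_neg h1q.le, ← one_div, lt_div_iff₀ hv] at hz1
  have hlt : ∀ k : ℕ, q ^ (α * k + β) < 1 := fun k => rpow_lt_one hq0.le hq1 (by positivity)
  have hS := one_add_mul_abs_tsum_neg_pow_mul_le_one (mul_pos hz0 hv).le hw1
    (monotone_qPochInf_rpow hq0 hq1 hα0.le hβ)
    (qPochInf_pos hq0.le hq1 (rpow_nonneg hq0.le _) (hlt 0)).le
    (fun k => qPochInf_le_one hq0.le hq1 (rpow_nonneg hq0.le _) (hlt k))
  rw [qML_neg_eq_mul_tsum hq1, abs_mul, abs_of_pos hK, le_div_iff₀ (by positivity)]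
  have hz : 1 + z ≤ (1 + v⁻¹) * (1 + z * v) := by
    field_simp
    nlinarith [mul_pos hz0 (mul_pos hv hv)]
  calc K * |_| * (1 + z) ≤ K * |_| * ((1 + v⁻¹) * (1 + z * v)) := by gcongr
    _ = K * (1 + v⁻¹) * ((1 + z * v) * |_|) := by ring
    _ ≤ K * (1 + v⁻¹) := mul_le_of_le_one_right (by positivity) hS

theorem qML_decay_bound (q α β : ℝ) (hq0 : 0 < q) (hq1 : q < 1)
    (hα0 : 0 < α) (hα2 : α < 2) (hβ : 0 < β) :
    ∃ C : ℝ, 0 < C ∧ ∀ z : ℝ, 0 < z → z < (1 - q) ^ (-α) →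
      |qML q α β (-z)| ≤ C / (1 + z) :=
  qML_decay_bound_general q α β hq0 hq1 hα0 hβ
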